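/- arXiv:2601.05915 — 4 statements merged into one kernel-verified Lean document; each statement's English description precedes it below -/
import Mathlib

section
/- For any prime p and any x, y in the cylinder I_{(a,b)} = {z ∈ pZ_p : v_p(z) = a and the first Schneider digit b_1(z) = b}, the Schneider map T_p satisfies |T_p(x) − T_p(y)|_p = p^a · |x − y|_p. In particular, T_p is locally expanding with expansion factor p^a on each cylinder. -/
/-- For any prime `p` and any `x, y` in the cylinder
`I_{(a,b)} = {z ∈ pℤ_p : v_p(z) = a, b₁(z) = b}`, the Schneider map
`T_p z = p^a / z − b` satisfies `‖T_p x − T_p y‖_p = p^a ⬝ ‖x − y‖_p`. -/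
theorem schneider_local_expansion (p : ℕ) [hp : Fact p.Prime]
    (a : ℤ) (b : ℕ) (hb1 : 1 ≤ b) (hb2 : b ≤ p - 1)
    (x y : ℚ_[p]) (hx0 : x ≠ 0) (hy0 : y ≠ 0)
    (hx1 : ‖x‖ < 1) (hy1 : ‖y‖ < 1)
    (hxa : x.valuation = a) (hya : y.valuation = a)
    (hbx : ‖(p : ℚ_[p]) ^ a / x - (b : ℚ_[p])‖ < 1)
    (hby : ‖(p : ℚ_[p]) ^ a / y - (b : ℚ_[p])‖ < 1) :
    ‖((p : ℚ_[p]) ^ a / x - (b : ℚ_[p])) - ((p : ℚ_[p]) ^ a / y - (b : ℚ_[p]))‖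
      = (p : ℝ) ^ a * ‖x - y‖ := by
  have hp0 : (0:ℝ) < p := by exact_mod_cast hp.out.pos
  have hnx : ‖x‖ = (p:ℝ) ^ (-a) := by
    rw [Padic.norm_eq_zpow_neg_valuation hx0, hxa]
  have hny : ‖y‖ = (p:ℝ) ^ (-a) := by
    rw [Padic.norm_eq_zpow_neg_valuation hy0, hya]
  have key : (p : ℚ_[p]) ^ a / x - (b : ℚ_[p]) - ((p:ℚ_[p])^a / y - (b : ℚ_[p]))
      = (p:ℚ_[p])^a * (y - x) / (x*y) := by
    field_simp
    ring
  rw [key, norm_div, norm_mul, norm_mul, hnx, hny, Padic.norm_p_zpow, norm_sub_rev]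
  have hne : (p:ℝ) ≠ 0 := ne_of_gt hp0
  rw [div_eq_iff (by positivity), ← zpow_add₀ hne]
  rw [mul_comm ((p:ℝ)^a) ‖x - y‖, mul_assoc, ← zpow_add₀ hne, mul_comm]
  norm_num
end

section
/- The potential log φ of the Schneider map is locally constant on cylinders of length 3: for every x ∈ pZ_p \ F, log φ(x) = a_3(x)·log p, where φ(x) = p^{a_2(x)}·ψ_2(T_p(x))/ψ_2(x) and ψ_2(x) = p^{−a_1(x)}·|x − p^{a_1(x)}/b_1(x)|_p^{−1}. -/
open Classical in
/-- The first Schneider digit `b₁(x) ∈ {1,…,p−1}`: the unique `b` with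
`b ≡ p^{v_p(x)}/x (mod p)`. -/
noncomputable def schneiderDigit (p : ℕ) [Fact p.Prime] (x : ℚ_[p]) : ℕ :=
  if h : ∃ b : ℕ, 1 ≤ b ∧ b ≤ p - 1 ∧
      ‖(p : ℚ_[p]) ^ x.valuation / x - (b : ℚ_[p])‖ < 1
  then h.choose else 0

open Classical in
/-- The Schneider map `T_p`. -/
noncomputable def schneiderMap (p : ℕ) [Fact p.Prime] (x : ℚ_[p]) : ℚ_[p] :=
  if x = 0 then 0
  else (p : ℚ_[p]) ^ x.valuation / x - (schneiderDigit p x : ℚ_[p])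

/-- `ψ₂(x) = p^{−a₁(x)} · ‖x − p^{a₁(x)}/b₁(x)‖⁻¹`. -/
noncomputable def schneiderPsi2 (p : ℕ) [Fact p.Prime] (x : ℚ_[p]) : ℝ :=
  (p : ℝ) ^ (-x.valuation) *
    ‖x - (p : ℚ_[p]) ^ x.valuation / (schneiderDigit p x : ℚ_[p])‖⁻¹

/-- `φ(x) = p^{a₂(x)} · ψ₂(T_p x)/ψ₂(x)`, where `a₂(x) = a₁(T_p x)`. -/
noncomputable def schneiderPhi (p : ℕ) [Fact p.Prime] (x : ℚ_[p]) : ℝ :=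
  (p : ℝ) ^ (schneiderMap p x).valuation * schneiderPsi2 p (schneiderMap p x)
    / schneiderPsi2 p x

lemma schneider_exists (p : ℕ) [Fact p.Prime] {x : ℚ_[p]} (hx : x ≠ 0) :
    ∃ b : ℕ, 1 ≤ b ∧ b ≤ p - 1 ∧
      ‖(p : ℚ_[p]) ^ x.valuation / x - (b : ℚ_[p])‖ < 1 := by
  have hp : p.Prime := Fact.out
  have hpR : (0 : ℝ) < p := by exact_mod_cast hp.pos
  have hz : ‖(p : ℚ_[p]) ^ x.valuation / x‖ = 1 := by
    rw [norm_div, Padic.norm_p_zpow, Padic.norm_eq_zpow_neg_valuation hx,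
      div_self (zpow_ne_zero _ hpR.ne')]
  set z : ℚ_[p] := (p : ℚ_[p]) ^ x.valuation / x with hzdef
  have hz1 : ‖z‖ ≤ 1 := le_of_eq hz
  set Z : ℤ_[p] := ⟨z, hz1⟩ with hZ
  refine ⟨Z.appr 1, ?_, ?_, ?_⟩
  · by_contra h
    have hb0 : Z.appr 1 = 0 := by omega
    have hsp := PadicInt.appr_spec 1 Z
    rw [hb0, Ideal.mem_span_singleton] at hsp
    obtain ⟨c, hc⟩ := hsp
    have : ‖Z - ((0:ℕ) : ℤ_[p])‖ < 1 := by
      rw [hc, norm_mul, pow_one, PadicInt.norm_p]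
      calc (p:ℝ)⁻¹ * ‖c‖ ≤ (p:ℝ)⁻¹ * 1 :=
            mul_le_mul_of_nonneg_left (PadicInt.norm_le_one c) (by positivity)
        _ < 1 := by
            rw [mul_one, inv_lt_one_iff₀]; right; exact_mod_cast hp.one_lt
    simp only [Nat.cast_zero, sub_zero] at this
    rw [PadicInt.norm_def, hZ] at this
    rw [hz] at this
    exact absurd this (by norm_num)
  · have := PadicInt.appr_lt Z 1
    rw [pow_one] at this
    omega
  · have hs := PadicInt.appr_spec 1 Z
    rw [Ideal.mem_span_singleton] at hs
    obtain ⟨c, hc⟩ := hs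
    have h1 : ‖Z - (Z.appr 1 : ℤ_[p])‖ < 1 := by
      rw [hc, norm_mul, pow_one, PadicInt.norm_p]
      calc (p:ℝ)⁻¹ * ‖c‖ ≤ (p:ℝ)⁻¹ * 1 :=
            mul_le_mul_of_nonneg_left (PadicInt.norm_le_one c) (by positivity)
        _ < 1 := by
            rw [mul_one, inv_lt_one_iff₀]; right; exact_mod_cast hp.one_lt
    rw [PadicInt.norm_def] at h1
    push_cast at h1
    exact h1

lemma schneiderPsi2_eq (p : ℕ) [Fact p.Prime] {x : ℚ_[p]} (hx : x ≠ 0)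
    (hTx : schneiderMap p x ≠ 0) :
    schneiderPsi2 p x = (p : ℝ) ^ (schneiderMap p x).valuation := by
  have hp : p.Prime := Fact.out
  have hpR : (0 : ℝ) < p := by exact_mod_cast hp.pos
  obtain ⟨hb1, hb2, hb3⟩ :
      1 ≤ schneiderDigit p x ∧ schneiderDigit p x ≤ p - 1 ∧
        ‖(p : ℚ_[p]) ^ x.valuation / x - (schneiderDigit p x : ℚ_[p])‖ < 1 := by
    rw [schneiderDigit, dif_pos (schneider_exists p hx)]
    exact (schneider_exists p hx).choose_spec
  set b : ℕ := schneiderDigit p x with hbdef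
  have hbne : (b : ℚ_[p]) ≠ 0 := Nat.cast_ne_zero.mpr (by omega)
  have hbnorm : ‖(b : ℚ_[p])‖ = 1 := by
    have hle : ‖((b : ℤ) : ℚ_[p])‖ ≤ 1 := Padic.norm_int_le_one _
    have : ¬ ‖((b : ℤ) : ℚ_[p])‖ < 1 := by
      rw [Padic.norm_intCast_lt_one_iff]
      intro hdvd
      have : p ∣ b := by exact_mod_cast hdvd
      have := Nat.le_of_dvd (by omega) this
      omega
    push_cast at hle this ⊢
    exact le_antisymm hle (not_lt.mp this)
  have hTdef : schneiderMap p x = (p : ℚ_[p]) ^ x.valuation / x - (b : ℚ_[p]) := by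
    rw [schneiderMap, if_neg hx]
  have key : x - (p : ℚ_[p]) ^ x.valuation / (b : ℚ_[p])
      = -(x / b) * ((p : ℚ_[p]) ^ x.valuation / x - (b : ℚ_[p])) := by
    field_simp
    ring
  have hnorm : ‖x - (p : ℚ_[p]) ^ x.valuation / (b : ℚ_[p])‖ = ‖x‖ * ‖schneiderMap p x‖ := by
    rw [key, hTdef, norm_mul, norm_neg, norm_div, hbnorm, div_one]
  rw [schneiderPsi2, ← hbdef, hnorm, Padic.norm_eq_zpow_neg_valuation hx,
    Padic.norm_eq_zpow_neg_valuation hTx, ← zpow_add₀ hpR.ne', ← zpow_neg, ← zpow_add₀ hpR.ne']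
  congr 1
  ring

/-- The potential `log φ` is locally constant on cylinders of
length 3: for every `x ∈ pℤ_p \ F`, `log φ(x) = a₃(x)·log p`, where
`a₃(x) = v_p(T_p² x)`. -/
theorem log_phi_locally_constant (p : ℕ) [Fact p.Prime] (x : ℚ_[p])
    (hx1 : ‖x‖ < 1) (hF : ∀ k : ℕ, (schneiderMap p)^[k] x ≠ 0) :
    Real.log (schneiderPhi p x)
      = (((schneiderMap p)^[2] x).valuation : ℝ) * Real.log p := by
  have hp : p.Prime := Fact.out
  have hpR : (0 : ℝ) < p := by exact_mod_cast hp.pos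
  have hx0 : x ≠ 0 := by simpa using hF 0
  have h1 : schneiderMap p x ≠ 0 := by simpa using hF 1
  have h2 : schneiderMap p (schneiderMap p x) ≠ 0 := by
    have := hF 2
    simpa [Function.iterate_succ_apply'] using this
  have hiter : (schneiderMap p)^[2] x = schneiderMap p (schneiderMap p x) := by
    simp [Function.iterate_succ_apply']
  rw [schneiderPhi, schneiderPsi2_eq p hx0 h1, schneiderPsi2_eq p h1 h2, hiter,
    mul_comm, mul_div_assoc, div_self (zpow_ne_zero _ hpR.ne'), mul_one,
    Real.log_zpow]
end

section
/- For x ∈ pZ_p \ F, the Birkhoff sums of log φ telescope: Σ_{k=0}^{n−1} log φ(T_p^k x) = −log|x − p_{n+1}(x)/q_{n+1}(x)|_p + log|x − p_1(x)/q_1(x)|_p, where p_m/q_m denotes the m-th Schneider convergent. Consequently lim_n (1/n)Σ_{k=0}^{n−1} log φ(T_p^k x) = −lim_n (1/n) log|x − p_n(x)/q_n(x)|_p whenever either limit exists. -/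
/-- The `n`-th Schneider convergent `p_n(x)/q_n(x)`, obtained by truncating the
Schneider continued fraction of `x` after `n` levels. -/
noncomputable def schneiderConv (p : ℕ) [Fact p.Prime] : ℕ → ℚ_[p] → ℚ_[p]
  | 0, _ => 0
  | n + 1, x => (p : ℚ_[p]) ^ x.valuation /
      ((schneiderDigit p x : ℚ_[p]) + schneiderConv p n (schneiderMap p x))

/-- `φ(x) = ‖x − p₂(x)/q₂(x)‖⁻¹ / ‖x − p₁(x)/q₁(x)‖⁻¹`. -/
noncomputable def schneiderPhiConv (p : ℕ) [Fact p.Prime] (x : ℚ_[p]) : ℝ :=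
  ‖x - schneiderConv p 2 x‖⁻¹ / ‖x - schneiderConv p 1 x‖⁻¹

section

variable {p : ℕ} [Fact p.Prime]

theorem Padic.norm_p_zpow_valuation {x : ℚ_[p]} (hx : x ≠ 0) : ‖(p : ℚ_[p]) ^ x.valuation‖ = ‖x‖ := by
  rw [Padic.norm_p_zpow, Padic.norm_eq_zpow_neg_valuation hx]

theorem Padic.norm_p_zpow_valuation_div {x : ℚ_[p]} (hx : x ≠ 0) :
    ‖(p : ℚ_[p]) ^ x.valuation / x‖ = 1 := by
  rw [norm_div, Padic.norm_p_zpow_valuation hx, div_self (norm_ne_zero_iff.mpr hx)]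

theorem exists_digit_norm_sub_lt_one {x : ℚ_[p]} (hx : x ≠ 0) :
    ∃ b : ℕ, 1 ≤ b ∧ b ≤ p - 1 ∧ ‖(p : ℚ_[p]) ^ x.valuation / x - (b : ℚ_[p])‖ < 1 := by
  have hu := Padic.norm_p_zpow_valuation_div hx
  obtain ⟨b, hbp, hb⟩ := PadicInt.exists_mem_range (⟨_, hu.le⟩ : ℤ_[p])
  rw [IsLocalRing.mem_maximalIdeal, PadicInt.mem_nonunits] at hb
  replace hb : ‖(p : ℚ_[p]) ^ x.valuation / x - b‖ < 1 := hb
  have hb0 : b ≠ 0 := by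
    rintro rfl
    rw [Nat.cast_zero, sub_zero] at hb
    exact hb.ne hu
  exact ⟨b, by omega, by omega, hb⟩

theorem schneiderDigit_spec {x : ℚ_[p]} (hx : x ≠ 0) :
    1 ≤ schneiderDigit p x ∧ schneiderDigit p x ≤ p - 1 ∧
      ‖(p : ℚ_[p]) ^ x.valuation / x - (schneiderDigit p x : ℚ_[p])‖ < 1 := by
  rw [schneiderDigit, dif_pos (exists_digit_norm_sub_lt_one hx)]
  exact (exists_digit_norm_sub_lt_one hx).choose_spec

theorem norm_schneiderDigit {x : ℚ_[p]} (hx : x ≠ 0) : ‖(schneiderDigit p x : ℚ_[p])‖ = 1 := by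
  have h := (schneiderDigit_spec hx).2.2
  rw [← Padic.norm_p_zpow_valuation_div hx] at h ⊢
  exact (Padic.norm_eq_of_norm_sub_lt_left h).symm

theorem norm_schneiderDigit_add {x c : ℚ_[p]} (hx : x ≠ 0) (hc : ‖c‖ < 1) :
    ‖(schneiderDigit p x : ℚ_[p]) + c‖ = 1 := by
  rw [Padic.add_eq_max_of_ne (by rw [norm_schneiderDigit hx]; exact hc.ne'),
    norm_schneiderDigit hx, max_eq_left hc.le]

theorem schneiderDigit_zero : schneiderDigit p 0 = 0 := by
  rw [schneiderDigit, dif_neg]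
  rintro ⟨b, hb1, hb2, hb⟩
  rw [div_zero, zero_sub, norm_neg, Padic.norm_natCast_lt_one_iff] at hb
  have := Nat.le_of_dvd hb1 hb
  omega

theorem schneiderMap_of_ne_zero {x : ℚ_[p]} (hx : x ≠ 0) :
    schneiderMap p x = (p : ℚ_[p]) ^ x.valuation / x - schneiderDigit p x :=
  if_neg hx

theorem schneiderDigit_add_schneiderMap {x : ℚ_[p]} (hx : x ≠ 0) :
    (schneiderDigit p x : ℚ_[p]) + schneiderMap p x = (p : ℚ_[p]) ^ x.valuation / x := by
  rw [schneiderMap_of_ne_zero hx, add_sub_cancel]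

theorem norm_schneiderMap_lt_one (x : ℚ_[p]) : ‖schneiderMap p x‖ < 1 := by
  by_cases hx : x = 0
  · simp [schneiderMap, hx]
  · rw [schneiderMap_of_ne_zero hx]
    exact (schneiderDigit_spec hx).2.2

theorem schneiderConv_zero_right (n : ℕ) : schneiderConv p n 0 = 0 := by
  induction n with
  | zero => rfl
  | succ n ih => rw [schneiderConv, schneiderMap, if_pos rfl, ih, schneiderDigit_zero]; simp

theorem norm_schneiderConv_lt_one (n : ℕ) {x : ℚ_[p]} (hx : ‖x‖ < 1) :
    ‖schneiderConv p n x‖ < 1 := by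
  induction n generalizing x with
  | zero => simp [schneiderConv]
  | succ n ih =>
    rcases eq_or_ne x 0 with rfl | hx0
    · rwa [schneiderConv_zero_right]
    · rw [schneiderConv, norm_div, norm_schneiderDigit_add hx0 (ih (norm_schneiderMap_lt_one x)),
        div_one, Padic.norm_p_zpow_valuation hx0]
      exact hx

theorem norm_sub_schneiderConv_succ {x : ℚ_[p]} (hx : x ≠ 0) (n : ℕ) :
    ‖x - schneiderConv p (n + 1) x‖ =
      ‖x‖ * ‖schneiderMap p x - schneiderConv p n (schneiderMap p x)‖ := by
  set b : ℚ_[p] := (schneiderDigit p x : ℚ_[p])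
  set t := schneiderMap p x
  set c := schneiderConv p n t
  set P : ℚ_[p] := (p : ℚ_[p]) ^ x.valuation
  have hbt : ‖b + t‖ = 1 := norm_schneiderDigit_add hx (norm_schneiderMap_lt_one x)
  have hbc : ‖b + c‖ = 1 := norm_schneiderDigit_add hx (norm_schneiderConv_lt_one n
    (norm_schneiderMap_lt_one x))
  have hP : P ≠ 0 := zpow_ne_zero _ (Nat.cast_ne_zero.mpr (Fact.out : p.Prime).ne_zero)
  have hx_eq : x = P / (b + t) := by
    rw [schneiderDigit_add_schneiderMap hx, div_div_cancel₀ hP]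
  have hbt0 : b + t ≠ 0 := norm_ne_zero_iff.mp (by rw [hbt]; exact one_ne_zero)
  have hbc0 : b + c ≠ 0 := norm_ne_zero_iff.mp (by rw [hbc]; exact one_ne_zero)
  have key : x - P / (b + c) = P * (c - t) / ((b + t) * (b + c)) := by
    rw [hx_eq]
    field_simp
    ring
  rw [schneiderConv, key, norm_div, norm_mul, norm_mul, hbt, hbc, Padic.norm_p_zpow_valuation hx,
    norm_sub_rev, mul_one, div_one]

theorem norm_sub_schneiderConv_add {x : ℚ_[p]} {k : ℕ}
    (hx : ∀ j < k, (schneiderMap p)^[j] x ≠ 0) (m : ℕ) :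
    ‖x - schneiderConv p (k + m) x‖ =
      (∏ j ∈ Finset.range k, ‖(schneiderMap p)^[j] x‖) *
        ‖(schneiderMap p)^[k] x - schneiderConv p m ((schneiderMap p)^[k] x)‖ := by
  induction k generalizing x with
  | zero => simp
  | succ k ih =>
    have hx0 : x ≠ 0 := hx 0 k.succ_pos
    have hTx : ∀ j < k, (schneiderMap p)^[j] (schneiderMap p x) ≠ 0 := fun j hj =>
      hx (j + 1) (Nat.succ_lt_succ hj)
    rw [Nat.add_right_comm, norm_sub_schneiderConv_succ hx0, ih hTx, Finset.prod_range_succ',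
      Function.iterate_zero_apply]
    simp only [Function.iterate_succ_apply]
    ring

theorem norm_sub_schneiderConv_pos {x : ℚ_[p]} (hx : ∀ k, (schneiderMap p)^[k] x ≠ 0) (n : ℕ) :
    0 < ‖x - schneiderConv p n x‖ := by
  rw [← n.add_zero, norm_sub_schneiderConv_add (fun j _ => hx j), schneiderConv, sub_zero]
  exact mul_pos (Finset.prod_pos fun j _ => norm_pos_iff.mpr (hx j)) (norm_pos_iff.mpr (hx n))

theorem schneiderPhiConv_iterate {x : ℚ_[p]} (hx : ∀ k, (schneiderMap p)^[k] x ≠ 0) (k : ℕ) :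
    schneiderPhiConv p ((schneiderMap p)^[k] x) =
      ‖x - schneiderConv p (k + 1) x‖ / ‖x - schneiderConv p (k + 2) x‖ := by
  have hprod : 0 < ∏ j ∈ Finset.range k, ‖(schneiderMap p)^[j] x‖ :=
    Finset.prod_pos fun j _ => norm_pos_iff.mpr (hx j)
  rw [schneiderPhiConv, inv_div_inv, norm_sub_schneiderConv_add (fun j _ => hx j),
    norm_sub_schneiderConv_add (fun j _ => hx j), mul_div_mul_left _ _ hprod.ne']

theorem sum_log_schneiderPhiConv_iterate {x : ℚ_[p]} (hx : ∀ k, (schneiderMap p)^[k] x ≠ 0)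
    (n : ℕ) :
    ∑ k ∈ Finset.range n, Real.log (schneiderPhiConv p ((schneiderMap p)^[k] x)) =
      -Real.log ‖x - schneiderConv p (n + 1) x‖ + Real.log ‖x - schneiderConv p 1 x‖ := by
  have hpos := norm_sub_schneiderConv_pos hx
  simp_rw [schneiderPhiConv_iterate hx, Real.log_div (hpos _).ne' (hpos _).ne']
  rw [Finset.sum_range_sub' (fun k => Real.log ‖x - schneiderConv p (k + 1) x‖)]
  ring

end

section

open Filter Topology Asymptotics

theorem tendsto_one_div_mul_add_const_iff (u : ℕ → ℝ) (c L : ℝ) :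
    Tendsto (fun n : ℕ => (1 / (n : ℝ)) * (u n + c)) atTop (𝓝 L) ↔
      Tendsto (fun n : ℕ => (1 / (n : ℝ)) * u n) atTop (𝓝 L) := by
  have hc : Tendsto (fun n : ℕ => (1 / (n : ℝ)) * c) atTop (𝓝 0) := by
    simpa using tendsto_one_div_atTop_nhds_zero_nat.mul_const c
  simp only [mul_add]
  constructor
  · intro h; simpa using h.sub hc
  · intro h; simpa using h.add hc

theorem tendsto_one_div_mul_succ_iff (u : ℕ → ℝ) (L : ℝ) :
    Tendsto (fun n : ℕ => (1 / (n : ℝ)) * u (n + 1)) atTop (𝓝 L) ↔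
      Tendsto (fun n : ℕ => (1 / (n : ℝ)) * u n) atTop (𝓝 L) := by
  have hequiv : (fun n : ℕ => (n : ℝ)) ~[atTop] fun n => (n : ℝ) + 1 :=
    isEquivalent_of_tendsto_one (tendsto_natCast_div_add_atTop 1)
  rw [← tendsto_add_atTop_iff_nat 1 (f := fun n : ℕ => (1 / (n : ℝ)) * u n)]
  push_cast
  simp only [one_div]
  exact (hequiv.inv.mul IsEquivalent.refl).tendsto_nhds_iff

end

theorem birkhoff_telescoping_general (p : ℕ) [Fact p.Prime] (x : ℚ_[p])
    (hF : ∀ k : ℕ, (schneiderMap p)^[k] x ≠ 0) :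
    (∀ n : ℕ,
      ∑ k ∈ Finset.range n, Real.log (schneiderPhiConv p ((schneiderMap p)^[k] x))
        = -Real.log ‖x - schneiderConv p (n + 1) x‖
          + Real.log ‖x - schneiderConv p 1 x‖) ∧
    ∀ L : ℝ,
      (Filter.Tendsto
          (fun n : ℕ => (1 / (n : ℝ)) *
            ∑ k ∈ Finset.range n, Real.log (schneiderPhiConv p ((schneiderMap p)^[k] x)))
          Filter.atTop (nhds L)
        ↔ Filter.Tendsto
            (fun n : ℕ => -((1 / (n : ℝ)) * Real.log ‖x - schneiderConv p n x‖))
            Filter.atTop (nhds L)) := by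
  refine ⟨sum_log_schneiderPhiConv_iterate hF, fun L => ?_⟩
  simp_rw [sum_log_schneiderPhiConv_iterate hF, ← mul_neg]
  exact (tendsto_one_div_mul_add_const_iff _ _ L).trans
    (tendsto_one_div_mul_succ_iff (fun n => -Real.log ‖x - schneiderConv p n x‖) L)

/-- For `x ∈ pℤ_p \ F`, the Birkhoff sums of `log φ`
telescope: `Σ_{k<n} log φ(T_p^k x) = −log‖x − p_{n+1}/q_{n+1}‖ + log‖x − p₁/q₁‖`;
consequently `lim (1/n) Σ_{k<n} log φ(T_p^k x) = −lim (1/n) log‖x − p_n/q_n‖`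
whenever either limit exists. -/
theorem birkhoff_telescoping (p : ℕ) [Fact p.Prime] (x : ℚ_[p])
    (hx1 : ‖x‖ < 1) (hF : ∀ k : ℕ, (schneiderMap p)^[k] x ≠ 0) :
    (∀ n : ℕ,
      ∑ k ∈ Finset.range n, Real.log (schneiderPhiConv p ((schneiderMap p)^[k] x))
        = -Real.log ‖x - schneiderConv p (n + 1) x‖
          + Real.log ‖x - schneiderConv p 1 x‖) ∧
    ∀ L : ℝ,
      (Filter.Tendsto
          (fun n : ℕ => (1 / (n : ℝ)) *
            ∑ k ∈ Finset.range n, Real.log (schneiderPhiConv p ((schneiderMap p)^[k] x)))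
          Filter.atTop (nhds L)
        ↔ Filter.Tendsto
            (fun n : ℕ => -((1 / (n : ℝ)) * Real.log ‖x - schneiderConv p n x‖))
            Filter.atTop (nhds L)) :=
  birkhoff_telescoping_general p x hF
end

section
/- For each prime p and n ≥ 1, the truncated Lyapunov spectrum at the midpoint value α = ((n+1)/2)·log p equals L_{p,n}(α) = (2/(n+1))·( log(p−1) + log n )/log p, i.e. (1/α)·(P_n(0) + 0·α) with t_α = 0. -/
open Classical in
/-- The truncated pressure `P_n(−t log ψ)`, with `P_n(0) = log((p−1)n)`. -/
noncomputable def truncatedPressure (p n : ℕ) (t : ℝ) : ℝ :=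
  if t = 0 then Real.log (((p : ℝ) - 1) * n)
  else Real.log ((p : ℝ) - 1)
    + Real.log (((p : ℝ) ^ (t * n) - 1) / ((p : ℝ) ^ (t * n) * ((p : ℝ) ^ t - 1)))

/-! For `t ≠ 0` and `x = p^t`, the geometric-series formula turns `P_n(t) + t·α` at the midpoint
`α = ((n+1)/2)·log p` into `log(p-1) + log(∑_{i<n} x^i) - ((n-1)/2)·log x`. By AM–GM,
`∑_{i<n} x^i ≥ n·x^((n-1)/2)`, so this is at least `log(p-1) + log n = P_n(0)`: the infimum is a
minimum, attained at `t = 0`. -/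

open Real Finset

lemma mul_pow_pred_le_geom_sum_sq (y : ℝ) (n : ℕ) :
    (n : ℝ) * y ^ (n - 1) ≤ ∑ i ∈ range n, (y ^ 2) ^ i := by
  -- pair the `k`-th and `(n-1-k)`-th terms and apply `2ab ≤ a² + b²` to `a = y^k`, `b = y^(n-1-k)`
  have hpair : ∀ k ∈ range n, 2 * y ^ (n - 1) ≤ (y ^ 2) ^ k + (y ^ 2) ^ (n - 1 - k) := by
    intro k hk
    have hsplit : y ^ (n - 1) = y ^ k * y ^ (n - 1 - k) := by
      rw [← pow_add, Nat.add_sub_cancel' (Nat.le_sub_one_of_lt (mem_range.mp hk))]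
    rw [hsplit, ← pow_mul, ← pow_mul, mul_comm 2 k, mul_comm 2 (n - 1 - k), pow_mul, pow_mul,
      ← mul_assoc]
    exact two_mul_le_add_sq _ _
  have hsum := sum_le_sum hpair
  rw [sum_add_distrib, sum_range_reflect (fun k => (y ^ 2) ^ k) n, sum_const, card_range,
    nsmul_eq_mul] at hsum
  linarith

lemma truncatedPressure_eq_of_ne_zero {p : ℕ} (hp : 1 < p) {n : ℕ} (hn : 0 < n) {t : ℝ}
    (ht : t ≠ 0) :
    truncatedPressure p n t =
      log ((p : ℝ) - 1) + log (∑ i ∈ range n, ((p : ℝ) ^ t) ^ i) - n * (t * log p) := by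
  have hp₀ : (0 : ℝ) < p := by positivity
  have hlog : log ((p : ℝ) ^ t) = t * log p := log_rpow hp₀ t
  have hx₁ : (p : ℝ) ^ t ≠ 1 := fun h => by
    rw [h, log_one, eq_comm] at hlog
    exact mul_ne_zero ht (log_pos (by exact_mod_cast hp)).ne' hlog
  have hS : 0 < ∑ i ∈ range n, ((p : ℝ) ^ t) ^ i :=
    sum_pos (fun i _ => by positivity) (nonempty_range_iff.mpr hn.ne')
  rw [truncatedPressure, if_neg ht, rpow_mul_natCast hp₀.le, div_mul_eq_div_div_swap,
    ← geom_sum_eq hx₁, log_div hS.ne' (by positivity), log_pow, hlog]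
  ring

lemma log_mul_le_truncatedPressure_add_midpoint {p : ℕ} (hp : 1 < p) {n : ℕ} (hn : 0 < n)
    (t : ℝ) :
    log (((p : ℝ) - 1) * n) ≤ truncatedPressure p n t + t * ((((n : ℝ) + 1) / 2) * log p) := by
  rcases eq_or_ne t 0 with rfl | ht
  · simp [truncatedPressure]
  have hp₀ : (0 : ℝ) < p := by positivity
  set y : ℝ := (p : ℝ) ^ (t / 2)
  have hy_sq : y ^ 2 = (p : ℝ) ^ t := by
    rw [← rpow_mul_natCast hp₀.le]; norm_num
  have hamgm :
      log n + ((n : ℝ) - 1) * (t / 2 * log p) ≤ log (∑ i ∈ range n, ((p : ℝ) ^ t) ^ i) := by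
    have h := log_le_log (by positivity) (mul_pow_pred_le_geom_sum_sq y n)
    rwa [hy_sq, log_mul (by positivity) (by positivity), log_pow, log_rpow hp₀,
      Nat.cast_pred hn] at h
  rw [truncatedPressure_eq_of_ne_zero hp hn ht,
    log_mul (sub_ne_zero.mpr (by exact_mod_cast hp.ne')) (by positivity)]
  linarith

lemma isLeast_truncatedPressure_add_midpoint {p : ℕ} (hp : 1 < p) {n : ℕ} (hn : 0 < n) :
    IsLeast {y : ℝ | ∃ t : ℝ, y = truncatedPressure p n t + t * ((((n : ℝ) + 1) / 2) * log p)}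
      (log (((p : ℝ) - 1) * n)) :=
  ⟨⟨0, by simp [truncatedPressure]⟩, by
    rintro _ ⟨t, rfl⟩
    exact log_mul_le_truncatedPressure_add_midpoint hp hn t⟩

/-- For `p` prime and `n ≥ 1`, the truncated Lyapunov spectrum
`L_{p,n}(α) = (1/α)·inf_{t∈ℝ}{P_n(−t log ψ) + tα}` evaluated at the midpoint
`α = ((n+1)/2)·log p` equals `(2/(n+1))·(log(p−1) + log n)/log p`, the infimum
being attained at `t_α = 0`. -/
theorem truncated_spectrum_midpoint (p n : ℕ) [Fact p.Prime] (hn : 1 ≤ n) :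
    (1 / ((((n : ℝ) + 1) / 2) * Real.log p)) *
      sInf {y : ℝ | ∃ t : ℝ,
        y = truncatedPressure p n t + t * ((((n : ℝ) + 1) / 2) * Real.log p)}
      = (2 / ((n : ℝ) + 1)) * ((Real.log ((p : ℝ) - 1) + Real.log n) / Real.log p) := by
  have hp : 1 < p := (Fact.out : p.Prime).one_lt
  rw [(isLeast_truncatedPressure_add_midpoint hp hn).csInf_eq,
    log_mul (sub_ne_zero.mpr (by exact_mod_cast hp.ne')) (by positivity)]
  field_simp
end
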